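/- Let F1 = {0,1} and F2 = {0,3,6} in Z, and F = F1 ⊕ F2 = {0,1,3,4,6,7}. Then F does not tile Z (there is no A ⊆ Z with F ⊕ A = Z), but F admits a bounded integer-valued co-tile: the function f = 1_{2Z} − 1_{{0,1,2} ⊕ 9Z} satisfies 1_F * f = 1. -/
import Mathlib


/-- `F ⊕ A = ℤ`: every integer has a unique representation `f + a`,
`f ∈ F`, `a ∈ A`. -/
def Tiles (F : Finset ℤ) (A : Set ℤ) : Prop :=
  ∀ z : ℤ, ∃! p : ℤ × ℤ, p.1 ∈ F ∧ p.2 ∈ A ∧ p.1 + p.2 = z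

theorem stmt_19 :
    (¬ ∃ A : Set ℤ, Tiles ({0, 1, 3, 4, 6, 7} : Finset ℤ) A) ∧
      (∀ x : ℤ,
        ∑ y ∈ ({0, 1, 3, 4, 6, 7} : Finset ℤ),
          ((if 2 ∣ (x - y) then (1 : ℤ) else 0) -
            (if (x - y) % 9 = 0 ∨ (x - y) % 9 = 1 ∨ (x - y) % 9 = 2 then (1 : ℤ) else 0)) = 1) := by
  constructor
  · rintro ⟨A, hA⟩
    have key : ∀ f1 f2 a1 a2 : ℤ, f1 ∈ ({0, 1, 3, 4, 6, 7} : Finset ℤ) →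
        f2 ∈ ({0, 1, 3, 4, 6, 7} : Finset ℤ) → a1 ∈ A → a2 ∈ A → a1 ≠ a2 →
        f1 + a1 ≠ f2 + a2 := by
      intro f1 f2 a1 a2 h1 h2 ha1 ha2 hne heq
      obtain ⟨r, -, hu⟩ := hA (f1 + a1)
      have e1 := hu (f1, a1) ⟨h1, ha1, rfl⟩
      have e2 := hu (f2, a2) ⟨h2, ha2, heq.symm⟩
      exact hne (congrArg Prod.snd (e1.trans e2.symm))
    obtain ⟨p, ⟨hpF, hpA, hps⟩, -⟩ := hA 0
    set a := p.2 with ha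
    obtain ⟨q, ⟨hqF, hqA, hqs⟩, -⟩ := hA (a + 2)
    have hq2 : q.2 = a + 2 - q.1 := by omega
    have hmem : ∀ t : ℤ, t ∈ ({0, 1, 3, 4, 6, 7} : Finset ℤ) ↔
        (t = 0 ∨ t = 1 ∨ t = 3 ∨ t = 4 ∨ t = 6 ∨ t = 7) := by
      intro t; simp [Finset.mem_insert]
    rw [hmem] at hqF
    rcases hqF with h | h | h | h | h | h
    · exact key 3 1 a q.2 (by decide) (by decide) hpA hqA (by omega) (by omega)
    · exact key 1 0 a q.2 (by decide) (by decide) hpA hqA (by omega) (by omega)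
    · exact key 0 1 a q.2 (by decide) (by decide) hpA hqA (by omega) (by omega)
    · exact key 1 3 a q.2 (by decide) (by decide) hpA hqA (by omega) (by omega)
    · exact key 0 4 a q.2 (by decide) (by decide) hpA hqA (by omega) (by omega)
    · exact key 1 6 a q.2 (by decide) (by decide) hpA hqA (by omega) (by omega)
  · intro x
    have H : ∀ y : ℤ, ((if 2 ∣ (x - y) then (1 : ℤ) else 0) -
        (if (x - y) % 9 = 0 ∨ (x - y) % 9 = 1 ∨ (x - y) % 9 = 2 then (1 : ℤ) else 0)) =
        ((if (x % 18 - y) % 2 = 0 then (1 : ℤ) else 0) -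
        (if (x % 18 - y) % 9 = 0 ∨ (x % 18 - y) % 9 = 1 ∨ (x % 18 - y) % 9 = 2 then (1 : ℤ) else 0)) := by
      intro y
      have h2 : (2 : ℤ) ∣ (x - y) ↔ (x % 18 - y) % 2 = 0 := by omega
      have h9 : (x - y) % 9 = (x % 18 - y) % 9 := by omega
      simp only [h2, h9]
    simp only [H]
    have h0 : 0 ≤ x % 18 := by omega
    have h1 : x % 18 < 18 := by omega
    set r := x % 18 with hr
    clear_value r
    interval_cases r <;> decide
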